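/- arXiv:2010.02713 — 4 statements merged into one kernel-verified Lean document; each statement's English description precedes it below -/
import Mathlib

section
/- For the three-peakon system with q_1 > q_2 > q_3, the quantity Ĥ = H_2 - H_0 H_1 + (1/6)H_0³ equals p_1 p_2 p_3 (1 + exp(-(q_1-q_3)) - exp(-(q_1-q_2)) - exp(-(q_2-q_3))). -/
theorem threepeakon_hatH (p₁ p₂ p₃ q₁ q₂ q₃ : ℝ) (h12 : q₁ > q₂) (h23 : q₂ > q₃) :
    (1/3) * (p₁^3 + p₂^3 + p₃^3
        + 3 * Real.exp (-(q₁ - q₂)) * (p₁^2 * p₂ + p₁ * p₂^2)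
        + 3 * Real.exp (-(q₂ - q₃)) * (p₂^2 * p₃ + p₂ * p₃^2)
        + 3 * Real.exp (-(q₁ - q₃)) * (p₁^2 * p₃ + p₁ * p₃^2)
        + 6 * Real.exp (-(q₁ - q₃)) * p₁ * p₂ * p₃)
      - (p₁ + p₂ + p₃) *
        ((1/2) * (p₁^2 + p₂^2 + p₃^2
          + 2 * p₁ * p₂ * Real.exp (-|q₁ - q₂|)
          + 2 * p₂ * p₃ * Real.exp (-|q₂ - q₃|)
          + 2 * p₁ * p₃ * Real.exp (-|q₁ - q₃|)))
      + (1/6) * (p₁ + p₂ + p₃)^3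
    = p₁ * p₂ * p₃ *
        (1 + Real.exp (-(q₁ - q₃)) - Real.exp (-(q₁ - q₂)) - Real.exp (-(q₂ - q₃))) := by
  rw [abs_of_pos (by linarith : q₁ - q₂ > 0), abs_of_pos (by linarith : q₂ - q₃ > 0),
    abs_of_pos (by linarith : q₁ - q₃ > 0)]
  ring
end

section
/- The Gauss curvature of the Riemannian metric g = diag(2/(1+exp(-2s_2)), 2/(1-exp(-2s_2))) on the half-plane s_2 > 0 equals (exp(2s_2) - 2)/(exp(2s_2) + 1)². -/
/-! In the variable `u = exp (-2 s₂) ∈ (0, 1)` the metric is `E = 2/(1+u)`, `G = 2/(1-u)`,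
so `√(E G) = 2/√(1-u²)` and `E'/√(E G) = 2u√(1-u²)/(1+u)²`, whose `u`-derivative is
`2(1-2u)/((1+u)²√(1-u²))`. With `du/ds₂ = -2u` the square roots cancel and the curvature is
`u(1-2u)/(1+u)²`, which is the claimed expression in `exp (2 s₂) = u⁻¹`. -/

section
open Real

lemma hasDerivAt_exp_const_mul (c v : ℝ) :
    HasDerivAt (fun v => exp (c * v)) (c * exp (c * v)) v := by
  simpa [mul_comm] using ((hasDerivAt_id v).const_mul c).exp

lemma deriv_two_div_one_add_exp_neg_two_mul :
    deriv (fun v => 2 / (1 + exp (-2 * v))) =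
      fun v => 4 * exp (-2 * v) / (1 + exp (-2 * v)) ^ 2 := by
  funext v
  rw [((hasDerivAt_const v 2).fun_div ((hasDerivAt_exp_const_mul (-2) v).const_add 1)
    (by positivity)).deriv]
  ring

lemma sqrt_two_div_one_add_mul_two_div_one_sub {u : ℝ} (h₁ : -1 < u) (h₂ : u < 1) :
    √(2 / (1 + u) * (2 / (1 - u))) = 2 / √(1 - u ^ 2) := by
  have h₃ : 1 - u ≠ 0 := by linarith
  have h₄ : 1 + u ≠ 0 := by linarith
  have h₅ : 1 - u ^ 2 ≠ 0 := by nlinarith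
  have hprod : 2 / (1 + u) * (2 / (1 - u)) = 2 ^ 2 / (1 - u ^ 2) := by
    field_simp
    ring
  rw [hprod, sqrt_div' _ (by nlinarith), sqrt_sq zero_le_two]

/-- `E'/√(E G)` for the two-peakon metric, as a function of `u = exp (-2 s₂)`. -/
noncomputable def twopeakonProfile (u : ℝ) : ℝ := 2 * u * √(1 - u ^ 2) / (1 + u) ^ 2

lemma hasDerivAt_twopeakonProfile {u : ℝ} (h₁ : -1 < u) (h₂ : u < 1) :
    HasDerivAt twopeakonProfile (2 * (1 - 2 * u) / ((1 + u) ^ 2 * √(1 - u ^ 2))) u := by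
  have hw : 0 < 1 - u ^ 2 := by nlinarith
  have h₄ : 1 + u ≠ 0 := by linarith
  have hsqrt := (((hasDerivAt_id' u).fun_pow 2).const_sub 1).sqrt hw.ne'
  have hnum := ((hasDerivAt_id' u).const_mul 2).fun_mul hsqrt
  have hden := ((hasDerivAt_id' u).const_add 1).fun_pow 2
  refine (hnum.fun_div hden (pow_ne_zero 2 h₄)).congr_deriv ?_
  have hsq : √(1 - u ^ 2) ^ 2 = 1 - u ^ 2 := sq_sqrt hw.le
  have : √(1 - u ^ 2) ≠ 0 := (sqrt_pos.mpr hw).ne'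
  field_simp
  rw [hsq]
  ring

lemma deriv_div_sqrt_eq_twopeakonProfile {v : ℝ} (hv : 0 < v) :
    deriv (fun v => 2 / (1 + exp (-2 * v))) v /
        √(2 / (1 + exp (-2 * v)) * (2 / (1 - exp (-2 * v)))) =
      twopeakonProfile (exp (-2 * v)) := by
  have h₀ : 0 < exp (-2 * v) := exp_pos _
  have h₁ : exp (-2 * v) < 1 := exp_lt_one_iff.mpr (by linarith)
  have hw : 0 < √(1 - exp (-2 * v) ^ 2) := sqrt_pos.mpr (by nlinarith)
  rw [deriv_two_div_one_add_exp_neg_two_mul,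
    sqrt_two_div_one_add_mul_two_div_one_sub (by linarith) h₁, twopeakonProfile]
  field_simp
  ring

end

/-- The Gauss curvature of the diagonal metric `g = diag (E, G)` depending only on the
second coordinate `s₂`, with `E s₂ = 2/(1+exp(-2 s₂))` and `G s₂ = 2/(1-exp(-2 s₂))`,
computed by the standard formula `K = -(1/(2 √(E G))) * d/ds₂ (E' / √(E G))`
(valid since the metric does not depend on `s₁`),
equals `(exp (2 s₂) - 2)/(exp (2 s₂) + 1)^2` on the half-plane `s₂ > 0`. -/
theorem twopeakon_gauss_curvature (s₂ : ℝ) (hs : s₂ > 0) (E G : ℝ → ℝ)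
    (hE : E = fun v => 2 / (1 + Real.exp (-2 * v)))
    (hG : G = fun v => 2 / (1 - Real.exp (-2 * v))) :
    -(1 / (2 * Real.sqrt (E s₂ * G s₂))) *
        deriv (fun v => deriv E v / Real.sqrt (E v * G v)) s₂
      = (Real.exp (2 * s₂) - 2) / (Real.exp (2 * s₂) + 1)^2 := by
  subst hE hG
  have hu₀ : 0 < Real.exp (-2 * s₂) := Real.exp_pos _
  have hu₁ : Real.exp (-2 * s₂) < 1 := Real.exp_lt_one_iff.mpr (by linarith)
  have hderiv := ((hasDerivAt_twopeakonProfile (by linarith) hu₁).comp s₂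
    (hasDerivAt_exp_const_mul (-2) s₂)).congr_of_eventuallyEq
    (by filter_upwards [lt_mem_nhds hs] with v hv using deriv_div_sqrt_eq_twopeakonProfile hv)
  have hexp : Real.exp (2 * s₂) = (Real.exp (-2 * s₂))⁻¹ := by
    rw [← Real.exp_neg]
    ring_nf
  rw [hderiv.deriv, sqrt_two_div_one_add_mul_two_div_one_sub (by linarith) hu₁, hexp]
  set u := Real.exp (-2 * s₂)
  have hw : 0 < √(1 - u ^ 2) := Real.sqrt_pos.mpr (by nlinarith)
  field_simp
end

section
/- In the two-peakon system with q_1(0) > q_2(0), p_1(0) < 0 < p_2(0), and z = q_1 - q_2, the derivative of z along the flow satisfies ż = (1 - exp(-z))(p_1 - p_2), and along solutions with p_1 < 0 < p_2 and z > 0 one has ż ≤ -√(1 - exp(-z)) · √((1 + exp(-z))(2H_1 - H_0²)), where H_0 = p_1 + p_2 and H_1 = (1/2)(p_1² + p_2² + 2p_1p_2 exp(-z)). -/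
/-!
Write `a = exp (-z) ∈ (0, 1)`. Then `2H₁ - H₀² = -2p₁p₂(1 - a)`, so the product under the
two square roots is `(1 - a)² (1 + a)(-2p₁p₂)`, and `(1 + a)(-2p₁p₂) ≤ -4p₁p₂ ≤ (p₂ - p₁)²`.
-/

theorem mul_sub_le_neg_sqrt_mul_sqrt_peakon {a x y : ℝ} (ha : a ≤ 1) (hx : x ≤ 0) (hy : 0 ≤ y) :
    (1 - a) * (x - y) ≤
      -(√(1 - a) * √((1 + a) * (2 * ((1 / 2) * (x ^ 2 + y ^ 2 + 2 * x * y * a)) - (x + y) ^ 2))) := by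
  have henergy : 2 * ((1 / 2) * (x ^ 2 + y ^ 2 + 2 * x * y * a)) - (x + y) ^ 2
      = -2 * x * y * (1 - a) := by ring
  have hxy : 0 ≤ -2 * x * y := by nlinarith
  have hamgm : (1 + a) * (-2 * x * y) ≤ (y - x) ^ 2 := by
    nlinarith [sq_nonneg (x + y), mul_nonneg (sub_nonneg.2 ha) hxy]
  rw [← Real.sqrt_mul (sub_nonneg.2 ha), le_neg, Real.sqrt_le_iff, henergy]
  refine ⟨by nlinarith, ?_⟩
  calc (1 - a) * ((1 + a) * (-2 * x * y * (1 - a)))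
      = (1 - a) ^ 2 * ((1 + a) * (-2 * x * y)) := by ring
    _ ≤ (1 - a) ^ 2 * (y - x) ^ 2 := by gcongr
    _ = (-((1 - a) * (x - y))) ^ 2 := by ring

/-- For the two-peakon Hamiltonian system (`q̇₁ = ∂H₁/∂p₁`, `q̇₂ = ∂H₁/∂p₂` in the
region `q₁ > q₂`), setting `z = q₁ - q₂`, the derivative of `z` along the flow is
`ż = (1 - exp(-z))(p₁ - p₂)`, and when `p₁ < 0 < p₂` this satisfies
`ż ≤ -√(1 - exp(-z)) · √((1 + exp(-z))(2H₁ - H₀²))`. -/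
theorem twopeakon_z_derivative_estimate (q₁ q₂ p₁ p₂ : ℝ → ℝ)
    (horder : ∀ t, q₁ t > q₂ t)
    (hsign : ∀ t, p₁ t < 0 ∧ 0 < p₂ t)
    (hq₁ : ∀ t, HasDerivAt q₁ (p₁ t + p₂ t * Real.exp (-(q₁ t - q₂ t))) t)
    (hq₂ : ∀ t, HasDerivAt q₂ (p₂ t + p₁ t * Real.exp (-(q₁ t - q₂ t))) t) :
    ∀ t : ℝ,
      HasDerivAt (fun s => q₁ s - q₂ s)
        ((1 - Real.exp (-(q₁ t - q₂ t))) * (p₁ t - p₂ t)) t ∧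
      (1 - Real.exp (-(q₁ t - q₂ t))) * (p₁ t - p₂ t) ≤
        -(Real.sqrt (1 - Real.exp (-(q₁ t - q₂ t))) *
          Real.sqrt ((1 + Real.exp (-(q₁ t - q₂ t))) *
            (2 * ((1/2) * ((p₁ t)^2 + (p₂ t)^2
                + 2 * p₁ t * p₂ t * Real.exp (-(q₁ t - q₂ t))))
              - (p₁ t + p₂ t)^2))) := by
  intro t
  obtain ⟨hp₁, hp₂⟩ := hsign t
  have hexp : Real.exp (-(q₁ t - q₂ t)) ≤ 1 := Real.exp_le_one_iff.2 (by linarith [horder t])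
  exact ⟨((hq₁ t).sub (hq₂ t)).congr_deriv (by ring),
    mul_sub_le_neg_sqrt_mul_sqrt_peakon hexp hp₁.le hp₂.le⟩
end

section
/- In the two-peakon system with z = q_1 - q_2 > 0 and h = p_1 - p_2, the identity 4H_1 - H_0² = H_0² exp(-z) + h²(1 - exp(-z)) holds, and hence 4H_1 - H_0² > 0 whenever (H_0, h) ≠ (0,0); moreover h satisfies ḣ = (1/2)(4H_1 - H_0² - h²) along the flow. -/
/-!
Expanding `H₁` gives `4H₁ - H₀² = h² + 4 p₁ p₂ e^{-z}`, and `4 p₁ p₂ = H₀² - h²`; this is the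
identity, which exhibits `4H₁ - H₀²` as a convex combination of `H₀²` and `h²` with weight
`e^{-z} ∈ (0, 1)`. Along the flow `ḣ = 2 p₁ p₂ e^{-z}`, which is half of `4H₁ - H₀² - h²`.
-/

open Real

theorem four_mul_hamiltonian_sub_sq_eq (a b e : ℝ) :
    4 * ((1/2) * (a^2 + b^2 + 2 * a * b * e)) - (a + b)^2
      = (a + b)^2 * e + (a - b)^2 * (1 - e) := by
  ring

theorem sq_mul_add_sq_mul_one_sub_pos {x y e : ℝ} (he₀ : 0 < e) (he₁ : e < 1)
    (hxy : ¬(x = 0 ∧ y = 0)) : 0 < x^2 * e + y^2 * (1 - e) := by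
  have h1e : 0 < 1 - e := sub_pos.mpr he₁
  rcases not_and_or.mp hxy with hx | hy
  · have : 0 < x^2 * e := mul_pos (by positivity) he₀
    nlinarith [mul_nonneg (sq_nonneg y) h1e.le]
  · have : 0 < y^2 * (1 - e) := mul_pos (by positivity) h1e
    nlinarith [mul_nonneg (sq_nonneg x) he₀.le]

theorem four_mul_hamiltonian_sub_sq_sub_sq_eq (a b e : ℝ) :
    4 * ((1/2) * (a^2 + b^2 + 2 * a * b * e)) - (a + b)^2 - (a - b)^2 = 4 * (a * b * e) := by
  ring

/-- For the two-peakon system with `z = q₁ - q₂ > 0`, `h = p₁ - p₂`,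
`H₀ = p₁ + p₂`, `H₁ = (1/2)(p₁² + p₂² + 2p₁p₂ e^{-z})`:
the identity `4H₁ - H₀² = H₀² e^{-z} + h²(1 - e^{-z})` holds; hence `4H₁ - H₀² > 0`
whenever `(H₀, h) ≠ (0,0)`; and along the Hamiltonian flow
(`ṗ₁ = p₁ p₂ e^{-z}`, `ṗ₂ = -p₁ p₂ e^{-z}`) one has `ḣ = (1/2)(4H₁ - H₀² - h²)`. -/
theorem twopeakon_h_identity_and_ode (z p₁ p₂ : ℝ → ℝ)
    (hz : ∀ t, z t > 0)
    (hp₁ : ∀ t, HasDerivAt p₁ (p₁ t * p₂ t * Real.exp (-(z t))) t)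
    (hp₂ : ∀ t, HasDerivAt p₂ (-(p₁ t * p₂ t * Real.exp (-(z t)))) t) :
    ∀ t : ℝ,
      (4 * ((1/2) * ((p₁ t)^2 + (p₂ t)^2 + 2 * p₁ t * p₂ t * Real.exp (-(z t))))
          - (p₁ t + p₂ t)^2
        = (p₁ t + p₂ t)^2 * Real.exp (-(z t))
          + (p₁ t - p₂ t)^2 * (1 - Real.exp (-(z t)))) ∧
      (¬(p₁ t + p₂ t = 0 ∧ p₁ t - p₂ t = 0) →
        0 < 4 * ((1/2) * ((p₁ t)^2 + (p₂ t)^2 + 2 * p₁ t * p₂ t * Real.exp (-(z t))))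
          - (p₁ t + p₂ t)^2) ∧
      HasDerivAt (fun s => p₁ s - p₂ s)
        ((1/2) * (4 * ((1/2) * ((p₁ t)^2 + (p₂ t)^2
            + 2 * p₁ t * p₂ t * Real.exp (-(z t))))
          - (p₁ t + p₂ t)^2 - (p₁ t - p₂ t)^2)) t := by
  intro t
  have hexp_lt_one : exp (-(z t)) < 1 := exp_lt_one_iff.mpr (neg_lt_zero.mpr (hz t))
  have hidentity := four_mul_hamiltonian_sub_sq_eq (p₁ t) (p₂ t) (exp (-(z t)))
  refine ⟨hidentity, fun hne => ?_, ?_⟩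
  · rw [hidentity]
    exact sq_mul_add_sq_mul_one_sub_pos (exp_pos _) hexp_lt_one hne
  · refine ((hp₁ t).sub (hp₂ t)).congr_deriv ?_
    rw [four_mul_hamiltonian_sub_sq_sub_sq_eq]
    ring
end
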